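/- Let x_1, …, x_n ∈ ℝ^d be unit vectors and let H be the Gram matrix of the Gaussian kernel, H_{ab} = exp(−‖x_a − x_b‖²/2) = Σ_{k=0}^∞ (e^{−1}/k!)(x_a·x_b)^k; assume H is positive definite. Then for any p ≥ 1, β ∈ ℝ^d, and y ∈ ℝⁿ defined by y_a = (β·x_a)^p, one has yᵀ H⁻¹ y ≤ e · p! · ‖β‖^{2p}. -/

import Mathlib

open Matrix
open scoped RealInnerProductSpace

/-!
Write `Φₖ x = x ⊗ ⋯ ⊗ x` (`k` factors), so that `⟪Φₖ x, Φₖ x'⟫ = ⟪x, x'⟫ ^ k`. On the unit sphere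
the Gaussian kernel is `e⁻¹ exp ⟪x, x'⟫ = ∑ₖ (e⁻¹ / k!) ⟪x, x'⟫ ^ k`, a series of positive
semidefinite kernels, so `zᵀ H z ≥ (e⁻¹ / p!) ‖∑ₐ zₐ Φₚ xₐ‖²` for every `z`. Taking `z = H⁻¹ y`,
the labels are `yₐ = ⟪Φₚ β, Φₚ xₐ⟫`, hence `yᵀ H⁻¹ y = zᵀ H z = ⟪Φₚ β, ∑ₐ zₐ Φₚ xₐ⟫`, and
Cauchy–Schwarz against the lower bound gives `yᵀ H⁻¹ y ≤ e · p! · ‖Φₚ β‖² = e · p! · ‖β‖^{2p}`.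
-/

variable {ι κ : Type*} [Fintype ι] [Fintype κ]

/-- The `k`-fold tensor power `x ⊗ ⋯ ⊗ x`, with coordinates indexed by words of length `k`. -/
noncomputable def tensorPowFeature (k : ℕ) (x : EuclideanSpace ℝ κ) :
    EuclideanSpace ℝ (Fin k → κ) :=
  WithLp.toLp 2 fun i => ∏ j, x (i j)

theorem inner_tensorPowFeature (k : ℕ) (x x' : EuclideanSpace ℝ κ) :
    ⟪tensorPowFeature k x, tensorPowFeature k x'⟫ = ⟪x, x'⟫ ^ k := by
  simp only [tensorPowFeature, PiLp.inner_apply, RCLike.inner_apply,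
    conj_trivial, Finset.sum_pow', Fintype.piFinset_univ, Finset.prod_mul_distrib]

theorem norm_tensorPowFeature_sq (k : ℕ) (x : EuclideanSpace ℝ κ) :
    ‖tensorPowFeature k x‖ ^ 2 = ‖x‖ ^ (2 * k) := by
  rw [← real_inner_self_eq_norm_sq, inner_tensorPowFeature, real_inner_self_eq_norm_sq, pow_mul]

theorem sum_sum_mul_inner_pow_eq_norm_sq (k : ℕ) (z : ι → ℝ) (x : ι → EuclideanSpace ℝ κ) :
    ∑ a, ∑ c, z a * z c * ⟪x a, x c⟫ ^ k = ‖∑ a, z a • tensorPowFeature k (x a)‖ ^ 2 := by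
  rw [← real_inner_self_eq_norm_sq, sum_inner]
  refine Finset.sum_congr rfl fun a _ => ?_
  rw [inner_sum]
  refine Finset.sum_congr rfl fun c _ => ?_
  rw [real_inner_smul_left, real_inner_smul_right, inner_tensorPowFeature]
  ring

theorem mul_norm_sum_tensorPowFeature_sq_le {b : ℕ → ℝ} (hb : ∀ k, 0 ≤ b k)
    {x : ι → EuclideanSpace ℝ κ} {H : Matrix ι ι ℝ}
    (hH : ∀ a c, HasSum (fun k => b k * ⟪x a, x c⟫ ^ k) (H a c)) (z : ι → ℝ) (p : ℕ) :
    b p * ‖∑ a, z a • tensorPowFeature p (x a)‖ ^ 2 ≤ z ⬝ᵥ (H *ᵥ z) := by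
  have hsum : HasSum (fun k => b k * ‖∑ a, z a • tensorPowFeature k (x a)‖ ^ 2)
      (z ⬝ᵥ (H *ᵥ z)) := by
    simp only [← sum_sum_mul_inner_pow_eq_norm_sq, Finset.mul_sum, dotProduct, mulVec]
    refine hasSum_sum fun a _ => hasSum_sum fun c _ => ?_
    convert! (hH a c).mul_left (z a * z c) using 1
    · funext k; ring
    · ring
  exact le_hasSum hsum p fun k _ => mul_nonneg (hb k) (sq_nonneg _)

theorem mul_dotProduct_inv_mulVec_le {E : Type*} [NormedAddCommGroup E]
    [InnerProductSpace ℝ E] [DecidableEq ι] {H : Matrix ι ι ℝ} (hHdet : IsUnit H.det)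
    {c : ℝ} (hc : 0 ≤ c) (φ : ι → E) (hφ : ∀ z, c * ‖∑ a, z a • φ a‖ ^ 2 ≤ z ⬝ᵥ (H *ᵥ z))
    (w : E) {y : ι → ℝ} (hy : ∀ a, y a = ⟪w, φ a⟫) :
    c * (y ⬝ᵥ (H⁻¹ *ᵥ y)) ≤ ‖w‖ ^ 2 := by
  set z := H⁻¹ *ᵥ y
  set v := ∑ a, z a • φ a
  have hHz : H *ᵥ z = y := by rw [mulVec_mulVec, mul_nonsing_inv _ hHdet, one_mulVec]
  have hlower : c * ‖v‖ ^ 2 ≤ y ⬝ᵥ z := by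
    simpa only [hHz, dotProduct_comm z] using hφ z
  have hupper : y ⬝ᵥ z ≤ ‖w‖ * ‖v‖ := by
    convert real_inner_le_norm w v using 1
    simp only [v, inner_sum, real_inner_smul_right, dotProduct, hy, mul_comm]
  have hv := norm_nonneg v
  nlinarith [sq_nonneg (‖w‖ - c * ‖v‖), mul_le_mul_of_nonneg_left hupper hc]

theorem mul_dotProduct_inv_mulVec_le_of_hasSum_inner_pow [DecidableEq ι] {b : ℕ → ℝ}
    (hb : ∀ k, 0 ≤ b k) {x : ι → EuclideanSpace ℝ κ} {H : Matrix ι ι ℝ} (hHdet : IsUnit H.det)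
    (hH : ∀ a c, HasSum (fun k => b k * ⟪x a, x c⟫ ^ k) (H a c)) (p : ℕ)
    (β : EuclideanSpace ℝ κ) {y : ι → ℝ} (hy : ∀ a, y a = ⟪β, x a⟫ ^ p) :
    b p * (y ⬝ᵥ (H⁻¹ *ᵥ y)) ≤ ‖β‖ ^ (2 * p) := by
  rw [← norm_tensorPowFeature_sq]
  exact mul_dotProduct_inv_mulVec_le hHdet (hb p) (fun a => tensorPowFeature p (x a))
    (mul_norm_sum_tensorPowFeature_sq_le hb hH · p) _ fun a => by
      rw [hy, inner_tensorPowFeature]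

theorem hasSum_gaussian_kernel_of_norm_eq_one {x x' : EuclideanSpace ℝ κ} (hx : ‖x‖ = 1)
    (hx' : ‖x'‖ = 1) :
    HasSum (fun k => Real.exp (-1) / k.factorial * ⟪x, x'⟫ ^ k) (Real.exp (-‖x - x'‖ ^ 2 / 2)) := by
  have hexponent : -‖x - x'‖ ^ 2 / 2 = -1 + ⟪x, x'⟫ := by
    rw [norm_sub_sq_real, hx, hx']
    ring
  rw [hexponent, Real.exp_add, Real.exp_eq_exp_ℝ]
  convert! (NormedSpace.expSeries_div_hasSum_exp ⟪x, x'⟫).mul_left (NormedSpace.exp (-1 : ℝ))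
    using 2 with k
  ring

theorem stmt17 (n d : ℕ) (x : Fin n → EuclideanSpace ℝ (Fin d))
    (hx : ∀ a, ‖x a‖ = 1)
    (H : Matrix (Fin n) (Fin n) ℝ)
    (hH : ∀ a c, H a c = Real.exp (-‖x a - x c‖ ^ 2 / 2))
    (hHpd : H.PosDef)
    (p : ℕ) (β : EuclideanSpace ℝ (Fin d))
    (y : Fin n → ℝ) (hy : ∀ a, y a = ⟪β, x a⟫ ^ p) :
    y ⬝ᵥ (H⁻¹ *ᵥ y) ≤
      Real.exp 1 * (Nat.factorial p : ℝ) * ‖β‖ ^ (2 * p) := by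
  have hbound := mul_dotProduct_inv_mulVec_le_of_hasSum_inner_pow
    (b := fun k => Real.exp (-1) / k.factorial) (fun k => by positivity)
    ((isUnit_iff_isUnit_det H).mp hHpd.isUnit)
    (fun a c => hH a c ▸ hasSum_gaussian_kernel_of_norm_eq_one (hx a) (hx c)) p β hy
  calc y ⬝ᵥ (H⁻¹ *ᵥ y)
      = Real.exp 1 * p.factorial * (Real.exp (-1) / p.factorial * (y ⬝ᵥ (H⁻¹ *ᵥ y))) := by
        rw [Real.exp_neg]; field_simp
    _ ≤ Real.exp 1 * p.factorial * ‖β‖ ^ (2 * p) := by gcongr
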